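/- arXiv:1802.01851 — 6 statements merged into one kernel-verified Lean document; each statement's English description precedes it below -/
import Mathlib

section
/- Let H be a group with trivial center such that the short exact sequence 1 → Inn(H) → Aut(H) → Out(H) → 1 splits. Then every extension of H by a finite group G (i.e., every short exact sequence 1 → H → Γ → G → 1 with G finite) splits, so Γ is a semidirect product H ⋊ G. -/
/-!
Γ acts on H by conjugation, giving `φ : Γ →* Aut(H)` which restricts to `H ↦ Inn(H)` on `H` and
induces the outer action `G →* Out(H)`. Composing the outer action with the splitting
`Out(H) →* Aut(H)` gives a second homomorphism `ψ : Γ →* Aut(H)` that agrees with `φ` modulo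
`Inn(H)` and kills `H`. The equalizer of `φ` and `ψ` is then a complement of `H`: it meets every
coset of `H`, since `φ` and `ψ` differ by an inner automorphism that can be absorbed by
multiplying with an element of `H`, and it meets `H` trivially because an element of `H` lying in
it induces the trivial inner automorphism, hence is central, hence trivial.
-/

instance innNormal (H : Type) [Group H] :
    ((MulAut.conj : H →* MulAut H).range).Normal := by
  constructor
  rintro x ⟨h, rfl⟩ g
  exact ⟨g h, by ext y; simp [mul_assoc]⟩

abbrev MulOut (N : Type) [Group N] := MulAut N ⧸ (MulAut.conj : N →* MulAut N).range

abbrev MulOut.mk (N : Type) [Group N] : MulAut N →* MulOut N := QuotientGroup.mk' _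

theorem MulAut.ker_conj {N : Type*} [Group N] :
    (MulAut.conj : N →* MulAut N).ker = Subgroup.center N := by
  ext n
  simp only [MonoidHom.mem_ker, Subgroup.mem_center_iff, MulEquiv.ext_iff, MulAut.conj_apply,
    MulAut.one_apply]
  exact forall_congr' fun m => by rw [mul_inv_eq_iff_eq_mul, eq_comm]

theorem MulAut.conj_injective_of_center_eq_bot {N : Type*} [Group N]
    (hZ : Subgroup.center N = ⊥) : Function.Injective (MulAut.conj : N →* MulAut N) := by
  rw [← MonoidHom.ker_eq_bot_iff, MulAut.ker_conj, hZ]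

namespace GroupExtension

variable {N E G : Type} [Group N] [Group E] [Group G] (S : GroupExtension N E G)

theorem conjAct_inl (n : N) : S.conjAct (S.inl n) = MulAut.conj n := by
  ext m
  apply S.inl_injective
  rw [inl_conjAct_comm, MulAut.conj_apply, map_mul, map_mul, map_inv]

theorem ker_rightHom_le_ker_mk_conjAct :
    S.rightHom.ker ≤ ((MulOut.mk N).comp S.conjAct).ker := by
  rintro e he
  obtain ⟨n, rfl⟩ := S.range_inl_eq_ker_rightHom ▸ he
  simp only [MonoidHom.mem_ker, MonoidHom.comp_apply, conjAct_inl, QuotientGroup.mk'_apply,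
    QuotientGroup.eq_one_iff, MonoidHom.mem_range, exists_apply_eq_apply]

noncomputable def outerAct : G →* MulOut N :=
  S.rightHom.liftOfRightInverse _ (Function.rightInverse_surjInv S.rightHom_surjective)
    ⟨_, S.ker_rightHom_le_ker_mk_conjAct⟩

theorem outerAct_rightHom (e : E) :
    S.outerAct (S.rightHom e) = MulOut.mk N (S.conjAct e) :=
  S.rightHom.liftOfRightInverse_comp_apply _ _ ⟨_, S.ker_rightHom_le_ker_mk_conjAct⟩ e

variable {S}

noncomputable def Splitting.ofBijective {K : Subgroup E}
    (hK : Function.Bijective (S.rightHom.comp K.subtype)) : S.Splitting where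
  toMonoidHom := K.subtype.comp (MulEquiv.ofBijective _ hK).symm.toMonoidHom
  rightInverse_rightHom := (MulEquiv.ofBijective _ hK).apply_symm_apply

section LiftOfOuterAct

variable {ψ : G →* MulAut N}
  (hψ : ∀ g, MulOut.mk N (ψ g) = S.outerAct g)

include hψ in
theorem conjAct_eq_mul_conj (e : E) :
    ∃ n : N, S.conjAct e = ψ (S.rightHom e) * MulAut.conj n := by
  have h := (hψ (S.rightHom e)).trans (S.outerAct_rightHom e)
  rw [QuotientGroup.mk'_apply, QuotientGroup.mk'_apply, QuotientGroup.eq] at h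
  obtain ⟨n, hn⟩ := h
  exact ⟨n, by rw [hn, mul_inv_cancel_left]⟩

include hψ in
theorem rightHom_eqLocus_surjective :
    Function.Surjective (S.rightHom.comp (S.conjAct.eqLocus (ψ.comp S.rightHom)).subtype) := by
  intro g
  obtain ⟨e, rfl⟩ := S.rightHom_surjective g
  obtain ⟨n, hn⟩ := conjAct_eq_mul_conj hψ e
  refine ⟨⟨e * S.inl n⁻¹, ?_⟩, by simp⟩
  change S.conjAct (e * S.inl n⁻¹) = ψ (S.rightHom (e * S.inl n⁻¹))
  rw [map_mul, map_mul, conjAct_inl, rightHom_inl, hn, mul_one, map_inv, mul_inv_cancel_right]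

theorem rightHom_eqLocus_injective (hZ : Subgroup.center N = ⊥) :
    Function.Injective (S.rightHom.comp (S.conjAct.eqLocus (ψ.comp S.rightHom)).subtype) := by
  rw [← MonoidHom.ker_eq_bot_iff, Subgroup.eq_bot_iff_forall]
  rintro ⟨e, he⟩ hker
  obtain ⟨n, rfl⟩ : e ∈ S.inl.range := S.range_inl_eq_ker_rightHom ▸ hker
  have hconj : MulAut.conj n = MulAut.conj 1 := by
    have he' : S.conjAct (S.inl n) = ψ (S.rightHom (S.inl n)) := he
    rwa [conjAct_inl, rightHom_inl, map_one, ← map_one MulAut.conj] at he'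
  obtain rfl := MulAut.conj_injective_of_center_eq_bot hZ hconj
  exact Subtype.ext (map_one _)

end LiftOfOuterAct

theorem nonempty_splitting_of_lift_outerAct (hZ : Subgroup.center N = ⊥) {ψ : G →* MulAut N}
    (hψ : ∀ g, MulOut.mk N (ψ g) = S.outerAct g) : Nonempty S.Splitting :=
  ⟨.ofBijective ⟨rightHom_eqLocus_injective hZ, rightHom_eqLocus_surjective hψ⟩⟩

end GroupExtension

theorem weak_extension_splits_general (H : Type) [Group H]
    (hZ : Subgroup.center H = ⊥)
    (hsplit : ∃ σ : (MulAut H ⧸ (MulAut.conj : H →* MulAut H).range) →* MulAut H,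
      ∀ a, QuotientGroup.mk' ((MulAut.conj : H →* MulAut H).range) (σ a) = a)
    (Γ G : Type) [Group Γ] [Group G]
    (ι : H →* Γ) (π : Γ →* G) (hι : Function.Injective ι)
    (hπ : Function.Surjective π) (hexact : ι.range = π.ker) :
    ∃ s : G →* Γ, ∀ g, π (s g) = g := by
  obtain ⟨σ, hσ⟩ := hsplit
  let S : GroupExtension H Γ G := ⟨ι, π, hι, hexact, hπ⟩
  obtain ⟨s⟩ := S.nonempty_splitting_of_lift_outerAct hZ (ψ := σ.comp S.outerAct)
    fun g => hσ (S.outerAct g)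
  exact ⟨s, s.rightHom_splitting⟩

/-- If `H` has trivial center and the exact sequence
`1 → Inn(H) → Aut(H) → Out(H) → 1` splits, then every extension of `H` by a finite
group `G` splits, i.e. is a semidirect product `H ⋊ G`. -/
theorem weak_extension_splits (H : Type) [Group H]
    (hZ : Subgroup.center H = ⊥)
    (hsplit : ∃ σ : (MulAut H ⧸ (MulAut.conj : H →* MulAut H).range) →* MulAut H,
      ∀ a, QuotientGroup.mk' ((MulAut.conj : H →* MulAut H).range) (σ a) = a)
    (Γ G : Type) [Group Γ] [Group G] [Finite G]
    (ι : H →* Γ) (π : Γ →* G) (hι : Function.Injective ι)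
    (hπ : Function.Surjective π) (hexact : ι.range = π.ker) :
    ∃ s : G →* Γ, ∀ g, π (s g) = g :=
  weak_extension_splits_general H hZ hsplit Γ G ι π hι hπ hexact
end

section
/- Let H be a group and U, V two normal subgroups of H with trivial intersection. Then for every normal subgroup K of H with KU = KV = H, the quotient group H/K is abelian. -/
/-!
Write `a = uK` with `u ∈ U` (possible since `KU = H`) and `b = vK` with `v ∈ V` (since `KV = H`).
The commutator of `u` and `v` lies in `U ∩ V = 1`, so `u` and `v` commute, hence so do their
images `a` and `b`.
-/

namespace QuotientGroup

theorem map_mk'_eq_top_of_sup_eq_top {G : Type*} [Group G] {N H : Subgroup G} [N.Normal]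
    (h : N ⊔ H = ⊤) : H.map (mk' N) = ⊤ := by
  rw [← Subgroup.map_top_of_surjective (mk' N) (mk'_surjective N), ← h, Subgroup.map_sup,
    map_mk'_self, bot_sup_eq]

theorem exists_mem_mk_eq_of_sup_eq_top {G : Type*} [Group G] {N H : Subgroup G} [N.Normal]
    (h : N ⊔ H = ⊤) (a : G ⧸ N) : ∃ x ∈ H, (x : G ⧸ N) = a :=
  (map_mk'_eq_top_of_sup_eq_top h).ge (Subgroup.mem_top a)

end QuotientGroup

/-- If `U, V` are normal subgroups of `H` with trivial intersection, then for every
normal subgroup `K` of `H` with `KU = KV = H`, the quotient `H/K` is abelian. -/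
theorem quotient_abelian_of_two_complements (H : Type) [Group H]
    (U V K : Subgroup H) [U.Normal] [V.Normal] [K.Normal]
    (hUV : U ⊓ V = ⊥) (hKU : K ⊔ U = ⊤) (hKV : K ⊔ V = ⊤) :
    ∀ a b : H ⧸ K, a * b = b * a := by
  intro a b
  obtain ⟨u, hu, rfl⟩ := QuotientGroup.exists_mem_mk_eq_of_sup_eq_top hKU a
  obtain ⟨v, hv, rfl⟩ := QuotientGroup.exists_mem_mk_eq_of_sup_eq_top hKV b
  have huv : Commute u v := Subgroup.commute_of_normal_of_disjoint U V ‹_› ‹_›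
    (disjoint_iff.mpr hUV) u v hu hv
  exact (huv.map (QuotientGroup.mk' K)).eq
end

section
/- Let S be a non-abelian simple group, G a group, and H₁, H₂ normal subgroups of G. If S is not a quotient of G/H₁ and not a quotient of G/H₂, then S is not a quotient of G/(H₁ ∩ H₂). -/
/-! If `φ : G → S` is onto a simple group and kills `H₁ ⊓ H₂`, the images of the normal subgroups
`H₁, H₂` are normal in `S`, hence trivial or everything. A trivial image means `φ` factors through
`G ⧸ Hᵢ`. If both images are all of `S`, then `⁅S, S⁆ = φ ⁅H₁, H₂⁆ ⊆ φ (H₁ ⊓ H₂) = 1`, so `S` is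
abelian. -/

section

variable {G S : Type*} [Group G] [Group S]

theorem exists_surjective_quotient_of_le_ker {φ : G →* S} (hφ : Function.Surjective φ)
    {H : Subgroup G} [H.Normal] (hH : H ≤ φ.ker) : ∃ f : G ⧸ H →* S, Function.Surjective f :=
  ⟨QuotientGroup.lift H φ hH, QuotientGroup.lift_surjective_of_surjective H φ hφ hH⟩

theorem mul_comm_of_map_eq_top_of_inf_le_ker {φ : G →* S} {H₁ H₂ : Subgroup G}
    [H₁.Normal] [H₂.Normal] (h₁ : H₁.map φ = ⊤) (h₂ : H₂.map φ = ⊤) (hker : H₁ ⊓ H₂ ≤ φ.ker)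
    (a b : S) : a * b = b * a := by
  have hcomm : ⁅(⊤ : Subgroup S), (⊤ : Subgroup S)⁆ = ⊥ := by
    nth_rw 1 [← h₁]; rw [← h₂, ← Subgroup.map_commutator, Subgroup.map_eq_bot_iff]
    exact (Subgroup.commutator_le_inf H₁ H₂).trans hker
  have hb : b ∈ Subgroup.centralizer (⊤ : Subgroup S) :=
    Subgroup.commutator_eq_bot_iff_le_centralizer.mp hcomm (Subgroup.mem_top b)
  exact Subgroup.mem_centralizer_iff.mp hb a (Subgroup.mem_top a)

end

/-- If a non-abelian simple group `S` is a quotient neither of `G/H₁` nor of `G/H₂`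
(for `H₁, H₂` normal in `G`), then `S` is not a quotient of `G/(H₁ ∩ H₂)`. -/
theorem not_quotient_of_inf (S : Type) [Group S] [IsSimpleGroup S]
    (hna : ¬ ∀ a b : S, a * b = b * a)
    (G : Type) [Group G] (H₁ H₂ : Subgroup G) [H₁.Normal] [H₂.Normal]
    (h1 : ¬ ∃ f : G ⧸ H₁ →* S, Function.Surjective f)
    (h2 : ¬ ∃ f : G ⧸ H₂ →* S, Function.Surjective f) :
    ¬ ∃ f : G ⧸ (H₁ ⊓ H₂) →* S, Function.Surjective f := by
  rintro ⟨f, hf⟩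
  set φ : G →* S := f.comp (QuotientGroup.mk' (H₁ ⊓ H₂))
  have hφ : Function.Surjective φ := hf.comp (QuotientGroup.mk'_surjective _)
  have hker : H₁ ⊓ H₂ ≤ φ.ker := fun x hx => by simp [φ, (QuotientGroup.eq_one_iff x).2 hx]
  rcases (Subgroup.Normal.map ‹H₁.Normal› φ hφ).eq_bot_or_eq_top with hb₁ | ht₁
  · exact h1 (exists_surjective_quotient_of_le_ker hφ ((Subgroup.map_eq_bot_iff _).mp hb₁))
  rcases (Subgroup.Normal.map ‹H₂.Normal› φ hφ).eq_bot_or_eq_top with hb₂ | ht₂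
  · exact h2 (exists_surjective_quotient_of_le_ker hφ ((Subgroup.map_eq_bot_iff _).mp hb₂))
  exact hna (mul_comm_of_map_eq_top_of_inf_le_ker ht₁ ht₂ hker)
end

section
/- Let 𝒞 be a class of finite groups that is stable under quotients. Then its dual class 𝒞* is stable under extensions: if G is a finite group with a normal subgroup H such that H ∈ 𝒞* and G/H ∈ 𝒞*, then G ∈ 𝒞*. -/
/-! A normal subgroup `K` with `G ⧸ K ∈ C` is trivialised in two steps. First, `G ⧸ (K ⊔ H)` is a
quotient both of `G ⧸ K ∈ C` and of `G ⧸ H ∈ C*`, so it lies in `C` and must be trivial: `KH = G`.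
Then `H` maps onto `G ⧸ K = HK ⧸ K`, and since `H ∈ C*` this image is trivial, so `K = G`. -/

/-- A class of groups, given as a predicate on groups. -/
def GroupClass : Type 1 := (G : Type) → [inst : Group G] → Prop

/-- The class `C` is closed under isomorphism. -/
def IsoClosed (C : GroupClass) : Prop :=
  ∀ (G : Type) [Group G] (G' : Type) [Group G'], Nonempty (G ≃* G') → C G → C G'

/-- The dual class `C*`: groups `G` such that the only normal subgroup `H` with
`G/H ∈ C` is `H = G`. -/
def dualClass (C : GroupClass) : GroupClass :=
  fun G _ => ∀ (H : Subgroup G) [H.Normal], C (G ⧸ H) → H = ⊤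

/-- The associated class `Ĉ`: groups admitting a subnormal series whose successive
quotients all lie in `C`. -/
def assocClass (C : GroupClass) : GroupClass := fun G _ =>
  ∃ (n : ℕ) (s : Fin (n + 1) → Subgroup G),
    s 0 = ⊥ ∧ s (Fin.last n) = ⊤ ∧
    (∀ i : Fin n, s i.castSucc ≤ s i.succ) ∧
    ∀ i : Fin n,
      ∃ hn : ((s i.castSucc).subgroupOf (s i.succ)).Normal,
        letI := hn
        C (↥(s i.succ) ⧸ (s i.castSucc).subgroupOf (s i.succ))

section

variable {C : GroupClass}

theorem IsoClosed.of_surjective (hiso : IsoClosed C)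
    (hquot : ∀ (G : Type) [Group G] [Finite G] (H : Subgroup G) [H.Normal], C G → C (G ⧸ H))
    {G Q : Type} [Group G] [Finite G] [Group Q] {f : G →* Q} (hf : Function.Surjective f)
    (hG : C G) : C Q :=
  hiso _ _ ⟨QuotientGroup.quotientKerEquivOfSurjective f hf⟩ (hquot G f.ker hG)

theorem dualClass.subsingleton_of_surjective (hiso : IsoClosed C) {G Q : Type} [Group G]
    [Group Q] (hG : dualClass C G) {f : G →* Q} (hf : Function.Surjective f) (hQ : C Q) :
    Subsingleton Q := by
  have hker : f.ker = ⊤ :=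
    hG f.ker (hiso _ _ ⟨(QuotientGroup.quotientKerEquivOfSurjective f hf).symm⟩ hQ)
  refine ⟨fun x y => ?_⟩
  obtain ⟨a, rfl⟩ := hf x
  obtain ⟨b, rfl⟩ := hf y
  rw [MonoidHom.ker_eq_top_iff.mp hker]
  rfl

theorem QuotientGroup.map_id_surjective {G : Type*} [Group G] {N M : Subgroup G} [N.Normal]
    [M.Normal] (h : N ≤ M) : Function.Surjective (QuotientGroup.map N M (MonoidHom.id G) h) :=
  QuotientGroup.map_surjective_of_surjective N M (MonoidHom.id G) QuotientGroup.mk_surjective h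

theorem QuotientGroup.mk'_comp_subtype_surjective {G : Type*} [Group G] {H N : Subgroup G}
    [N.Normal] (h : N ⊔ H = ⊤) : Function.Surjective ((QuotientGroup.mk' N).comp H.subtype) := by
  intro x
  obtain ⟨g, rfl⟩ := QuotientGroup.mk'_surjective N x
  obtain ⟨n, hn, k, hk, rfl⟩ := Subgroup.mem_sup_of_normal_left.mp (h ▸ Subgroup.mem_top g)
  refine ⟨⟨k, hk⟩, ?_⟩
  simp [(QuotientGroup.eq_one_iff n).mpr hn]

end

/-- If `C` is stable under quotients, then the dual class `C*` is stable under
extensions. -/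
theorem dualClass_extension_stable (C : GroupClass) (hiso : IsoClosed C)
    (hquot : ∀ (G : Type) [Group G] [Finite G] (H : Subgroup G) [H.Normal],
      C G → C (G ⧸ H))
    (G : Type) [Group G] [Finite G] (H : Subgroup G) [H.Normal]
    (h1 : dualClass C ↥H) (h2 : dualClass C (G ⧸ H)) : dualClass C G := by
  intro K _ hK
  have hKH : C (G ⧸ (K ⊔ H)) :=
    hiso.of_surjective hquot (QuotientGroup.map_id_surjective le_sup_left) hK
  have hsup : K ⊔ H = ⊤ := QuotientGroup.subsingleton_iff.mp <|
    h2.subsingleton_of_surjective hiso (QuotientGroup.map_id_surjective le_sup_right) hKH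
  exact QuotientGroup.subsingleton_iff.mp <|
    h1.subsingleton_of_surjective hiso (QuotientGroup.mk'_comp_subtype_surjective hsup) hK
end

section
/- For any class 𝒞 of finite groups, the dual class satisfies 𝒞* ⊆ 𝒞***, i.e., 𝒞* is contained in the dual of the bidual of 𝒞. Moreover, if 𝒞 is stable under quotients, then 𝒞* = 𝒞***. -/
theorem dualClass_of_surjective {C : GroupClass} (hiso : IsoClosed C) {G G' : Type} [Group G]
    [Group G'] {f : G →* G'} (hf : Function.Surjective f) (hG : dualClass C G) :
    dualClass C G' := by
  intro K _ hK
  let φ : G →* G' ⧸ K := (QuotientGroup.mk' K).comp f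
  have hφ : Function.Surjective φ := (QuotientGroup.mk'_surjective K).comp hf
  have hker : φ.ker = K.comap f := by
    rw [← MonoidHom.comap_ker, QuotientGroup.ker_mk']
  have htop : φ.ker = ⊤ :=
    hG φ.ker (hiso _ _ ⟨(QuotientGroup.quotientKerEquivOfSurjective φ hφ).symm⟩ hK)
  rw [← Subgroup.map_comap_eq_self_of_surjective hf K, ← hker, htop,
    Subgroup.map_top_of_surjective f hf]

theorem IsoClosed.dualClass {C : GroupClass} (hiso : IsoClosed C) : IsoClosed (dualClass C) :=
  fun _ _ _ _ ⟨e⟩ => dualClass_of_surjective hiso (f := e.toMonoidHom) e.surjective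

def QuotientClosed (C : GroupClass) : Prop :=
  ∀ (G : Type) [Group G] [Finite G] (H : Subgroup G) [H.Normal], C G → C (G ⧸ H)

theorem quotientClosed_dualClass {C : GroupClass} (hiso : IsoClosed C) :
    QuotientClosed (dualClass C) :=
  fun _ _ _ H _ => dualClass_of_surjective hiso (QuotientGroup.mk'_surjective H)

theorem subsingleton_of_dualClass {C : GroupClass} (hiso : IsoClosed C) {Q : Type} [Group Q]
    (hd : dualClass C Q) (hc : C Q) : Subsingleton Q := by
  have hbot : (⊥ : Subgroup Q) = ⊤ := hd ⊥ (hiso _ _ ⟨QuotientGroup.quotientBot.symm⟩ hc)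
  have : Subsingleton (Q ⧸ (⊥ : Subgroup Q)) := QuotientGroup.subsingleton_iff.mpr hbot
  exact QuotientGroup.quotientBot.symm.injective.subsingleton

theorem dualClass_dualClass_of_mem {C : GroupClass} (hiso : IsoClosed C) (hquot : QuotientClosed C)
    {G : Type} [Group G] [Finite G] (hG : C G) : dualClass (dualClass C) G := fun H _ hH =>
  QuotientGroup.subsingleton_iff.mp (subsingleton_of_dualClass hiso hH (hquot G H hG))

theorem dualClass_anti {C D : GroupClass} (hCD : ∀ (G : Type) [Group G] [Finite G], C G → D G)
    {G : Type} [Group G] [Finite G] (hG : dualClass D G) : dualClass C G :=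
  fun H _ hH => hG H (hCD _ hH)

/-- One always has `C* ⊆ C***`, and if `C` is stable under quotients then
`C* = C***`. -/
theorem dual_subset_triple_dual (C : GroupClass) (hiso : IsoClosed C) :
    (∀ (G : Type) [Group G] [Finite G],
      dualClass C G → dualClass (dualClass (dualClass C)) G) ∧
    ((∀ (G : Type) [Group G] [Finite G] (H : Subgroup G) [H.Normal],
        C G → C (G ⧸ H)) →
      ∀ (G : Type) [Group G] [Finite G],
        dualClass C G ↔ dualClass (dualClass (dualClass C)) G) := by
  have dual_subset : ∀ (G : Type) [Group G] [Finite G],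
      dualClass C G → dualClass (dualClass (dualClass C)) G := fun _ _ _ =>
    dualClass_dualClass_of_mem hiso.dualClass (quotientClosed_dualClass hiso)
  exact ⟨dual_subset, fun hquot G _ _ =>
    ⟨dual_subset G, dualClass_anti fun _ _ _ => dualClass_dualClass_of_mem hiso hquot⟩⟩
end

section
/- Let 𝒞 be a class of finite groups and G a non-trivial finite group. Then G ∈ 𝒞** (the bidual class) if and only if G/Rad(G) is isomorphic to a non-empty direct product of finite simple groups all belonging to 𝒞, where Rad(G) is the intersection of all maximal normal subgroups of G. -/
/-- `H` is a maximal normal subgroup of `G` (equivalently, `G/H` is simple). -/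
def IsMaximalNormal {G : Type} [Group G] (H : Subgroup G) : Prop :=
  H.Normal ∧ H ≠ ⊤ ∧ ∀ K : Subgroup G, K.Normal → H < K → K = ⊤

/-- The Baer radical of `G`: the intersection of all maximal normal subgroups. -/
def BaerRadical (G : Type) [Group G] : Subgroup G :=
  sInf {H | IsMaximalNormal H}

instance (G : Type) [Group G] : (BaerRadical G).Normal := by
  constructor
  intro n hn g
  rw [BaerRadical, Subgroup.mem_sInf] at hn ⊢
  intro H hH
  exact hH.1.conj_mem n (hn H hH) g

/-!
For finite `G` and isomorphism-closed `𝒞`, membership in `𝒞**` only depends on the simple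
quotients of `G`: a simple group outside `𝒞` lies in `𝒞*`, and a proper quotient `G/H` lying
in `𝒞*` would have a simple quotient `G/M` in `𝒞`, which `G/H ∈ 𝒞*` forbids. So `G ∈ 𝒞**` iff
`G/M ∈ 𝒞` for every maximal normal `M`. An irredundant family of maximal normal subgroups
cutting out `Rad(G)` yields `G/Rad(G) ≅ ∏ G/Mᵢ` by the Chinese remainder argument, and
conversely a simple quotient of a finite product of simple groups is isomorphic to a factor,
because the images of the factors are normal.
-/

open Function Pointwise

section

variable {G : Type} [Group G]

theorem IsMaximalNormal.isSimpleGroup_quotient {M : Subgroup G} [M.Normal]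
    (hM : IsMaximalNormal M) : IsSimpleGroup (G ⧸ M) := by
  obtain ⟨-, hne, hmax⟩ := hM
  have : Nontrivial (G ⧸ M) := QuotientGroup.nontrivial_iff.2 hne
  have hmk := QuotientGroup.mk'_surjective M
  refine ⟨fun N hN => ?_⟩
  have hle : M ≤ N.comap (QuotientGroup.mk' M) := by
    simpa only [QuotientGroup.ker_mk'] using MonoidHom.ker_le_comap (QuotientGroup.mk' M) N
  rcases hle.eq_or_lt with heq | hlt
  · left
    refine Subgroup.comap_injective hmk ?_
    rw [← heq, MonoidHom.comap_bot, QuotientGroup.ker_mk']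
  · right
    rw [← Subgroup.map_comap_eq_self_of_surjective hmk N, hmax _ (hN.comap _) hlt,
      Subgroup.map_top_of_surjective _ hmk]

theorem exists_le_isMaximalNormal [Finite G] (H : Subgroup G) [hH : H.Normal] (hHtop : H ≠ ⊤) :
    ∃ M, IsMaximalNormal M ∧ H ≤ M := by
  obtain ⟨M, ⟨hM, hMtop, hHM⟩, hmax⟩ := Set.Finite.exists_maximalFor id
    {K : Subgroup G | K.Normal ∧ K ≠ ⊤ ∧ H ≤ K} (Set.toFinite _) ⟨H, hH, hHtop, le_rfl⟩
  refine ⟨M, ⟨hM, hMtop, fun K hK hMK => ?_⟩, hHM⟩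
  by_contra hKtop
  exact hMK.not_ge (hmax ⟨hK, hKtop, hHM.trans hMK.le⟩ hMK.le)

theorem baerRadical_ne_top [Finite G] [Nontrivial G] : BaerRadical G ≠ ⊤ := by
  obtain ⟨M, hM, -⟩ := exists_le_isMaximalNormal (⊥ : Subgroup G) bot_ne_top
  exact ne_top_of_le_ne_top hM.2.1 (sInf_le hM)

theorem mem_dualClass_of_isSimpleGroup {C : GroupClass} (hiso : IsoClosed C) {S : Type} [Group S]
    [IsSimpleGroup S] (hS : ¬ C S) : dualClass C S := by
  intro H hH hCH
  refine hH.eq_bot_or_eq_top.resolve_left ?_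
  rintro rfl
  exact hS (hiso _ _ ⟨QuotientGroup.quotientBot⟩ hCH)

theorem mem_bidual_iff_forall_isMaximalNormal {C : GroupClass} (hiso : IsoClosed C) [Finite G] :
    dualClass (dualClass C) G ↔ ∀ (M : Subgroup G) [M.Normal], IsMaximalNormal M → C (G ⧸ M) := by
  constructor
  · intro hG M _ hM
    by_contra hC
    have := hM.isSimpleGroup_quotient
    exact hM.2.1 (hG M (mem_dualClass_of_isSimpleGroup hiso hC))
  · intro hG H _ hCH
    by_contra hHtop
    obtain ⟨M, hM, hHM⟩ := exists_le_isMaximalNormal H hHtop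
    have := hM.1
    have hCM : C ((G ⧸ H) ⧸ M.map (QuotientGroup.mk' H)) :=
      hiso _ _ ⟨(QuotientGroup.quotientQuotientEquivQuotient H M hHM).symm⟩ (hG M hM)
    refine hM.2.1 ?_
    have hker : (QuotientGroup.mk' H).ker ≤ M := by rwa [QuotientGroup.ker_mk']
    rw [← Subgroup.comap_map_eq_self hker, hCH _ hCM, Subgroup.comap_top]

end

theorem MonoidHom.ker_ne_top_of_surjective {S Q : Type*} [Group S] [Group Q] [Nontrivial Q]
    {f : S →* Q} (hf : Surjective f) : f.ker ≠ ⊤ := fun hker =>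
  bot_ne_top ((f.range_eq_bot_iff.2 (f.ker_eq_top_iff.1 hker)).symm.trans (f.range_eq_top.2 hf))

theorem MonoidHom.bijective_of_surjective_of_isSimpleGroup {S Q : Type*} [Group S] [IsSimpleGroup S]
    [Group Q] [Nontrivial Q] {f : S →* Q} (hf : Surjective f) : Bijective f :=
  ⟨f.ker_eq_bot_iff.1 (f.normal_ker.eq_bot_or_eq_top.resolve_right (f.ker_ne_top_of_surjective hf)),
    hf⟩

theorem Pi.mul_mulSingle_mul_inv {ι : Type*} [DecidableEq ι] {S : ι → Type*} [∀ i, Group (S i)]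
    (y : ∀ i, S i) (i : ι) (a : S i) :
    y * Pi.mulSingle i a * y⁻¹ = Pi.mulSingle i (y i * a * (y i)⁻¹) := by
  ext j
  rcases eq_or_ne j i with rfl | hj
  · simp
  · simp [Pi.mulSingle_eq_of_ne hj]

theorem exists_mulEquiv_of_surjective_pi {ι : Type*} [Finite ι] {S : ι → Type*}
    [∀ i, Group (S i)] [∀ i, IsSimpleGroup (S i)] {Q : Type*} [Group Q] [IsSimpleGroup Q]
    {f : (∀ i, S i) →* Q} (hf : Surjective f) : ∃ i, Nonempty (S i ≃* Q) := by
  classical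
  have hnormal : ∀ i, (f.comp (MonoidHom.mulSingle S i)).range.Normal := by
    refine fun i => ⟨?_⟩
    rintro _ ⟨a, rfl⟩ q
    obtain ⟨y, rfl⟩ := hf q
    refine ⟨y i * a * (y i)⁻¹, ?_⟩
    simp only [MonoidHom.comp_apply, MonoidHom.mulSingle_apply]
    rw [← Pi.mul_mulSingle_mul_inv, map_mul, map_mul, map_inv]
  by_cases htop : ∃ i, (f.comp (MonoidHom.mulSingle S i)).range = ⊤
  · obtain ⟨i, hi⟩ := htop
    exact ⟨i, ⟨MulEquiv.ofBijective _ (MonoidHom.bijective_of_surjective_of_isSimpleGroup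
      (MonoidHom.range_eq_top.1 hi))⟩⟩
  · simp only [not_exists] at htop
    refine absurd (eq_top_iff.2 fun y _ => ?_) (f.ker_ne_top_of_surjective hf)
    refine Subgroup.pi_mem_of_mulSingle_mem y fun i => f.mem_ker.2 ?_
    have hbot := (hnormal i).eq_bot_or_eq_top.resolve_right (htop i)
    exact DFunLike.congr_fun (MonoidHom.range_eq_bot_iff.1 hbot) (y i)

section

variable {G : Type} [Group G] {ι : Type*} (M : ι → Subgroup G) [∀ i, (M i).Normal]

instance Subgroup.normal_iInf {κ : Sort*} (N : κ → Subgroup G) [∀ k, (N k).Normal] :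
    (⨅ k, N k).Normal :=
  Subgroup.normal_iInf_normal inferInstance

theorem ker_pi_mk' : (MonoidHom.pi fun i => QuotientGroup.mk' (M i)).ker = ⨅ i, M i := by
  ext x
  simp [funext_iff, MonoidHom.pi_apply, QuotientGroup.eq_one_iff]

theorem surjective_pi_quotient_of_isMaximalNormal [Finite ι] (hmax : ∀ i, IsMaximalNormal (M i))
    (hirr : ∀ i, ¬ ⨅ (j) (_ : j ≠ i), M j ≤ M i) :
    Surjective (MonoidHom.pi fun i => QuotientGroup.mk' (M i)) := by
  classical
  set φ := MonoidHom.pi fun i => QuotientGroup.mk' (M i)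
  have hsingle : ∀ i (g : G), Pi.mulSingle i (g : G ⧸ M i) ∈ φ.range := by
    intro i g
    set N := ⨅ (j) (_ : j ≠ i), M j
    have hN : N ⊔ M i = ⊤ := (hmax i).2.2 _ inferInstance (right_lt_sup.2 (hirr i))
    -- hence `g = a * b` with `b ∈ M i` and `a` in every other `M j`, so `a ↦ Pi.mulSingle i g`
    obtain ⟨a, ha, b, hb, rfl⟩ : g ∈ (N : Set G) * M i := by
      rw [← Subgroup.mul_normal, hN]; trivial
    refine ⟨a, funext fun j => ?_⟩
    rcases eq_or_ne j i with rfl | hj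
    · simp [φ, QuotientGroup.mk_mul_of_mem a hb]
    · have : a ∈ M j := (iInf₂_le j hj : N ≤ M j) ha
      simp [φ, Pi.mulSingle_eq_of_ne hj, this]
  intro y
  refine Subgroup.pi_mem_of_mulSingle_mem (H := φ.range) y fun i => ?_
  obtain ⟨g, hg⟩ := QuotientGroup.mk_surjective (y i)
  exact hg ▸ hsingle i g

noncomputable def quotientIInfMulEquivPi [Finite ι] (hmax : ∀ i, IsMaximalNormal (M i))
    (hirr : ∀ i, ¬ ⨅ (j) (_ : j ≠ i), M j ≤ M i) : G ⧸ ⨅ i, M i ≃* ∀ i, G ⧸ M i :=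
  (QuotientGroup.quotientMulEquivOfEq (ker_pi_mk' M).symm).trans
    (QuotientGroup.quotientKerEquivOfSurjective _
      (surjective_pi_quotient_of_isMaximalNormal M hmax hirr))

end

theorem exists_fin_irredundant_iInf_eq_sInf {α : Type*} [CompleteLattice α] {S : Set α}
    (hS : S.Finite) (hne : sInf S ≠ ⊤) :
    ∃ (n : ℕ) (a : Fin (n + 1) → α), (∀ i, a i ∈ S) ∧ ⨅ i, a i = sInf S ∧
      ∀ i, ¬ ⨅ (j) (_ : j ≠ i), a j ≤ a i := by
  obtain ⟨T, ⟨hTS, hT⟩, hmin⟩ := Set.Finite.exists_minimalFor id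
    {T | T ⊆ S ∧ sInf T = sInf S} (hS.finite_subsets.subset fun _ hT => hT.1) ⟨S, subset_rfl, rfl⟩
  have : Finite T := hS.subset hTS
  obtain ⟨k, ⟨e⟩⟩ := Finite.exists_equiv_fin T
  cases k with
  | zero =>
    have := e.isEmpty
    rw [← hT, Set.isEmpty_coe_sort.1 this, sInf_empty] at hne
    exact absurd rfl hne
  | succ n =>
    refine ⟨n, fun i => e.symm i, fun i => hTS (e.symm i).2, ?_, fun i hle => ?_⟩
    · rw [← hT, sInf_eq_iInf']
      exact e.symm.iInf_comp (g := fun t : T => (t : α))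
    -- dropping the `i`-th member would give a smaller subset of `S` with the same infimum
    have hdiff : sInf (T \ {(e.symm i : α)}) = sInf S := by
      refine le_antisymm (hT ▸ le_sInf fun t ht => ?_) (hT ▸ sInf_le_sInf Set.sdiff_subset)
      by_cases hti : t = e.symm i
      · rw [hti]
        refine le_trans (le_iInf₂ fun j hj => sInf_le ⟨(e.symm j).2, ?_⟩) hle
        exact Subtype.coe_injective.ne (e.symm.injective.ne hj)
      · exact sInf_le ⟨ht, hti⟩
    exact (hmin ⟨Set.sdiff_subset.trans hTS, hdiff⟩ Set.sdiff_subset (e.symm i).2).2 rfl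

/-- A non-trivial finite group `G` lies in the bidual class `C**` if and only if
`G/Rad(G)` is isomorphic to a non-empty direct product of finite simple groups all
belonging to `C`. -/
theorem mem_bidual_iff_quotient_radical (C : GroupClass) (hiso : IsoClosed C)
    (G : Type) [Group G] [Finite G] [Nontrivial G] :
    dualClass (dualClass C) G ↔
      ∃ (n : ℕ) (S : Fin (n + 1) → Type) (instS : ∀ i, Group (S i)),
        letI := instS
        (∀ i, Finite (S i) ∧ IsSimpleGroup (S i) ∧ C (S i)) ∧
        Nonempty ((G ⧸ BaerRadical G) ≃* ∀ i, S i) := by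
  rw [mem_bidual_iff_forall_isMaximalNormal hiso]
  constructor
  · intro hG
    obtain ⟨n, M, hM, hinf, hirr⟩ : ∃ (n : ℕ) (M : Fin (n + 1) → Subgroup G),
        (∀ i, IsMaximalNormal (M i)) ∧ ⨅ i, M i = BaerRadical G ∧
          ∀ i, ¬ ⨅ (j) (_ : j ≠ i), M j ≤ M i :=
      exists_fin_irredundant_iInf_eq_sInf (Set.toFinite _) baerRadical_ne_top
    have := fun i => (hM i).1
    exact ⟨n, fun i => G ⧸ M i, inferInstance,
      fun i => ⟨inferInstance, (hM i).isSimpleGroup_quotient, hG (M i) (hM i)⟩,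
      ⟨(QuotientGroup.quotientMulEquivOfEq hinf.symm).trans (quotientIInfMulEquivPi M hM hirr)⟩⟩
  · rintro ⟨n, S, instS, hS, ⟨e⟩⟩ M _ hM
    have := fun i => (hS i).2.1
    have := hM.isSimpleGroup_quotient
    let q : G ⧸ BaerRadical G →* G ⧸ M := QuotientGroup.map _ _ (MonoidHom.id G) (sInf_le hM)
    have hq : Surjective q := QuotientGroup.map_surjective_of_surjective _ _ _
      QuotientGroup.mk_surjective _
    obtain ⟨i, ⟨f⟩⟩ := exists_mulEquiv_of_surjective_pi (f := q.comp e.symm.toMonoidHom)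
      (hq.comp e.symm.surjective)
    exact hiso _ _ ⟨f⟩ (hS i).2.2
end
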